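/- arXiv:0812.4291 — 2 statements merged into one kernel-verified Lean document; each statement's English description precedes it below -/
import Mathlib

section
/- With the blocking relation ≤ on subsets of the vertex set of a tree (with respect to a fixed nonempty subset V), if U ∼ U' (i.e. U ≤ U' and U' ≤ U), then U ∩ U' ∼ U and U ∪ U' ∼ U. -/
/-!
If `w ≠ u` lies on every `u`–`v` path, then `w` is strictly closer to `v` than `u` (it lies on
a shortest `u`–`v` walk, which is a path). Starting from `x ∈ U'`, alternately pick a blocking
vertex in `U` and in `U'`. Lying on every path to `v` is transitive, so each choice lies on every
`x`–`v` path, and the distance to `v` drops until a choice repeats the previous vertex, which is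
then in `U ∩ U'`.
-/

/-- `U'` blocks `U` from `V` in the graph `G`: for every `u ∈ U` and `v ∈ V`
there is some `u' ∈ U'` lying on the (unique, when `G` is a tree) path from `u` to `v`. -/
def Blocks {S : Type*} (G : SimpleGraph S) (V U' U : Set S) : Prop :=
  ∀ u ∈ U, ∀ v ∈ V, ∃ u' ∈ U', ∀ (p : G.Walk u v), p.IsPath → u' ∈ p.support

/-- `U ∼ U'`: each blocks the other from `V`. -/
def BlockEquiv {S : Type*} (G : SimpleGraph S) (V U U' : Set S) : Prop :=
  Blocks G V U U' ∧ Blocks G V U' U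

namespace SimpleGraph

variable {S : Type*} {G : SimpleGraph S} {u v w x : S}

def OnEveryPath (G : SimpleGraph S) (u v w : S) : Prop :=
  ∀ p : G.Walk u v, p.IsPath → w ∈ p.support

theorem onEveryPath_start : G.OnEveryPath u v u :=
  fun p _ ↦ p.start_mem_support

theorem OnEveryPath.trans (hw : G.OnEveryPath u v w) (hx : G.OnEveryPath w v x) :
    G.OnEveryPath u v x := by
  classical
  exact fun p hp ↦ p.support_dropUntil_subset_support (hw p hp) (hx _ (hp.dropUntil (hw p hp)))

theorem OnEveryPath.dist_lt (hw : G.OnEveryPath u v w) (huv : G.Reachable u v) (hwu : w ≠ u) :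
    G.dist w v < G.dist u v := by
  classical
  obtain ⟨p, hp⟩ := huv.exists_walk_length_eq_dist
  have hwp : w ∈ p.support := hw p (p.isPath_of_length_eq_dist hp)
  calc G.dist w v ≤ (p.dropUntil w hwp).length := dist_le _
    _ < p.length := Walk.length_dropUntil_lt_length hwp hwu
    _ = G.dist u v := hp

end SimpleGraph

section

open SimpleGraph

variable {S : Type*} {G : SimpleGraph S} {V U U' W : Set S}

theorem blocks_of_subset (h : U ⊆ U') : Blocks G V U' U :=
  fun u hu _ _ ↦ ⟨u, h hu, onEveryPath_start⟩

theorem Blocks.union (h : Blocks G V W U) (h' : Blocks G V W U') : Blocks G V W (U ∪ U') := by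
  rintro u (hu | hu')
  exacts [h u hu, h' u hu']

theorem BlockEquiv.symm (h : BlockEquiv G V U U') : BlockEquiv G V U' U :=
  ⟨h.2, h.1⟩

theorem BlockEquiv.inter_blocks_right (hG : G.Preconnected) (h : BlockEquiv G V U U') :
    Blocks G V (U ∩ U') U' := by
  intro x hx v hv
  induction hd : G.dist x v using Nat.strong_induction_on generalizing U U' x with
  | _ n ih =>
    obtain ⟨b, hbU, hxb : G.OnEveryPath x v b⟩ := h.1 x hx v hv
    by_cases hbx : b = x
    · exact ⟨x, ⟨hbx ▸ hbU, hx⟩, onEveryPath_start⟩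
    obtain ⟨w, hwU'U, hbw⟩ := ih _ (hd ▸ hxb.dist_lt (hG x v) hbx) h.symm b hbU rfl
    exact ⟨w, hwU'U.symm, hxb.trans hbw⟩

theorem BlockEquiv.inter_blocks_left (hG : G.Preconnected) (h : BlockEquiv G V U U') :
    Blocks G V (U ∩ U') U :=
  Set.inter_comm U U' ▸ h.symm.inter_blocks_right hG

end

theorem blockEquiv_inter_union_general {S : Type*} (G : SimpleGraph S)
    (hG : G.IsTree) (V : Set S) (U U' : Set S)
    (h : BlockEquiv G V U U') :
    BlockEquiv G V (U ∩ U') U ∧ BlockEquiv G V (U ∪ U') U :=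
  ⟨⟨h.inter_blocks_left hG.connected.preconnected, blocks_of_subset Set.inter_subset_left⟩,
    ⟨blocks_of_subset Set.subset_union_left, (blocks_of_subset subset_rfl).union h.1⟩⟩

/-- if `U ∼ U'` then `U ∩ U' ∼ U` and `U ∪ U' ∼ U`. -/
theorem blockEquiv_inter_union {S : Type*} [Fintype S] (G : SimpleGraph S)
    (hG : G.IsTree) (V : Set S) (hV : V.Nonempty) (U U' : Set S)
    (h : BlockEquiv G V U U') :
    BlockEquiv G V (U ∩ U') U ∧ BlockEquiv G V (U ∪ U') U :=
  blockEquiv_inter_union_general G hG V U U' h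
end

section
/- Every equivalence class of the blocking equivalence relation ∼ on subsets of the vertex set of a tree contains a unique smallest element and a unique largest element with respect to inclusion. -/
/-!
The largest element of the class of `U` is the union of the class, since `U` blocks each
member. The smallest is the intersection of the class: given `u ∈ U` and `v ∈ V`, let `a` be
the point of `U` on the path from `u` to `v` nearest to `v`. A member `W` of the class has a
point `w` on the path from `a` to `v`, and `U` has a point on the path from `w` to `v`, which
by the choice of `a` is `a` itself. A path cannot pass through `a` twice, so `w = a`; thus `a`
lies in every member of the class.
-/

open SimpleGraph Set

section

variable {S : Type*} {G : SimpleGraph S} {V : Set S}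

theorem SimpleGraph.Walk.exists_mem_support_isPath_meeting_only_at_start {A : Set S} {u v : S}
    (p : G.Walk u v) (hA : ∃ x ∈ p.support, x ∈ A) :
    ∃ a ∈ A, a ∈ p.support ∧
      ∃ q : G.Walk a v, q.IsPath ∧ ∀ x ∈ q.support, x ∈ A → x = a := by
  classical
  induction p with
  | nil =>
    obtain ⟨x, hx, hxA⟩ := hA
    rw [Walk.mem_support_nil_iff] at hx
    subst hx
    exact ⟨x, hxA, Walk.start_mem_support _, .nil, .nil, by simp⟩
  | @cons u w v h p ih =>
    by_cases hp : ∃ x ∈ p.support, x ∈ A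
    · obtain ⟨a, haA, hap, q, hq, hnear⟩ := ih hp
      exact ⟨a, haA, by simp [hap], q, hq, hnear⟩
    · have huA : u ∈ A := by
        obtain ⟨x, hx, hxA⟩ := hA
        rcases List.mem_cons.mp hx with rfl | hx
        · exact hxA
        · exact absurd ⟨x, hx, hxA⟩ hp
      refine ⟨u, huA, Walk.start_mem_support _, (Walk.cons h p).bypass,
        Walk.bypass_isPath _, fun x hx hxA => ?_⟩
      rcases List.mem_cons.mp (Walk.support_bypass_subset_support _ hx) with rfl | hx
      · rfl
      · exact absurd ⟨x, hx, hxA⟩ hp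

theorem Blocks.mono {A A' B B' : Set S} (h : Blocks G V A B) (hA : A ⊆ A') (hB : B' ⊆ B) :
    Blocks G V A' B' := fun u hu v hv =>
  let ⟨a, ha, hap⟩ := h u (hB hu) v hv
  ⟨a, hA ha, hap⟩

theorem blocks_refl (U : Set S) : Blocks G V U U :=
  fun u hu _ _ => ⟨u, hu, fun p _ => p.start_mem_support⟩

theorem blockEquiv_refl (U : Set S) : BlockEquiv G V U U :=
  ⟨blocks_refl U, blocks_refl U⟩

theorem mem_of_blocks_of_isPath_meeting_only_at_start {A B : Set S}
    (hAB : Blocks G V A B) (hBA : Blocks G V B A) {a v : S} (ha : a ∈ A) (hv : v ∈ V)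
    (q : G.Walk a v) (hq : q.IsPath) (hnear : ∀ x ∈ q.support, x ∈ A → x = a) :
    a ∈ B := by
  obtain ⟨b, hb, hbq⟩ := hBA a ha v hv
  obtain ⟨r₁, r₂, -, hr₂, rfl⟩ := hq.mem_support_iff_exists_append.mp (hbq q hq)
  obtain ⟨a', ha', ha'r₂⟩ := hAB b hb v hv
  have ha'_mem : a' ∈ r₂.support := ha'r₂ r₂ hr₂
  obtain rfl : a' = a := hnear a' (Walk.support_subset_support_append_right _ _ ha'_mem) ha'
  rcases eq_or_ne a' b with rfl | hab
  · exact hb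
  · exact absurd rfl (hq.ne_of_mem_support_of_append hab r₁.start_mem_support ha'_mem)

theorem blockEquiv_sInter (hG : G.IsTree) (U : Set S) :
    BlockEquiv G V (⋂₀ {W | BlockEquiv G V W U}) U := by
  refine ⟨fun u hu v hv => ?_,
    (blocks_refl U).mono subset_rfl (sInter_subset_of_mem (blockEquiv_refl U))⟩
  obtain ⟨p, hp⟩ := (hG.existsUnique_path u v).exists
  obtain ⟨a, haU, hap, q, hq, hnear⟩ :=
    p.exists_mem_support_isPath_meeting_only_at_start ⟨u, p.start_mem_support, hu⟩
  refine ⟨a, fun W hW => ?_, fun r hr => ?_⟩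
  · exact mem_of_blocks_of_isPath_meeting_only_at_start hW.2 hW.1 haU hv q hq hnear
  · rw [(hG.existsUnique_path u v).unique hr hp]
    exact hap

theorem blockEquiv_sUnion (U : Set S) : BlockEquiv G V (⋃₀ {W | BlockEquiv G V W U}) U :=
  ⟨(blocks_refl U).mono (subset_sUnion_of_mem (blockEquiv_refl U)) subset_rfl,
    fun u ⟨_, hW, hu⟩ v hv => hW.2 u hu v hv⟩

end

theorem blockEquiv_exists_unique_min_max_general {S : Type*} (G : SimpleGraph S)
    (hG : G.IsTree) (V : Set S) (U : Set S) :
    (∃! m : Set S, BlockEquiv G V m U ∧ ∀ W : Set S, BlockEquiv G V W U → m ⊆ W) ∧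
      (∃! M : Set S, BlockEquiv G V M U ∧ ∀ W : Set S, BlockEquiv G V W U → W ⊆ M) := by
  set C := {W | BlockEquiv G V W U}
  have hmin : IsLeast C (⋂₀ C) :=
    ⟨blockEquiv_sInter hG U, fun _ hW => sInter_subset_of_mem hW⟩
  have hmax : IsGreatest C (⋃₀ C) :=
    ⟨blockEquiv_sUnion U, fun _ hW => subset_sUnion_of_mem hW⟩
  exact ⟨⟨_, hmin, fun _ hm => (hmin.unique hm).symm⟩,
    ⟨_, hmax, fun _ hM => (hmax.unique hM).symm⟩⟩

/-- every `∼`-equivalence class contains a unique smallest and a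
unique largest element with respect to inclusion. -/
theorem blockEquiv_exists_unique_min_max {S : Type*} [Fintype S] (G : SimpleGraph S)
    (hG : G.IsTree) (V : Set S) (hV : V.Nonempty) (U : Set S) :
    (∃! m : Set S, BlockEquiv G V m U ∧ ∀ W : Set S, BlockEquiv G V W U → m ⊆ W) ∧
      (∃! M : Set S, BlockEquiv G V M U ∧ ∀ W : Set S, BlockEquiv G V W U → W ⊆ M) :=
  blockEquiv_exists_unique_min_max_general G hG V U
end
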